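/- arXiv:1202.5523 — 3 statements merged into one kernel-verified Lean document; each statement's English description precedes it below -/
import Mathlib

section
/- Every walk on a finite quiver G belongs to the smallest set of walks that contains all simple paths and all simple cycles of G and is closed under defined nesting products; that is, every walk on G can be obtained from simple paths and simple cycles by finitely many nesting products. -/
/-- A walk on the quiver with vertex set `V` and edge relation `E`:
a nonempty list of vertices in which consecutive vertices are joined by edges. -/
structure QWalk (V : Type) (E : V → V → Prop) : Type where
  verts : List V
  ne : verts ≠ []
  chain : verts.Chain' E

namespace QWalk

variable {V : Type} {E : V → V → Prop}

/-- The initial vertex of a walk. -/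
def first (w : QWalk V E) : V := w.verts.head w.ne

/-- The final vertex of a walk. -/
def last (w : QWalk V E) : V := w.verts.getLast w.ne

/-- The length of a walk (its number of edges). -/
def len (w : QWalk V E) : ℕ := w.verts.length - 1

/-- A walk is trivial when it has length `0`. -/
def Trivial (w : QWalk V E) : Prop := w.len = 0

/-- A walk is a cycle when its initial and final vertices coincide. -/
def IsCycle (w : QWalk V E) : Prop := w.first = w.last

/-- A cycle off the vertex `β`. -/
def IsCycleOff (w : QWalk V E) (β : V) : Prop := w.IsCycle ∧ w.first = β

/-- A simple path: all vertices distinct (trivial walks included). -/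
def IsSimplePath (w : QWalk V E) : Prop := w.verts.Nodup

/-- A simple cycle: a cycle whose internal vertices are pairwise distinct and
different from the base vertex (trivial walks included). -/
def IsSimpleCycle (w : QWalk V E) : Prop := w.IsCycle ∧ w.verts.tail.Nodup

/-- `IsNest a b w` holds precisely when `(a, b)` is a canonical couple (so the nesting
product `a ⊙ b` is defined) and `w = a ⊙ b`: here `b` is a cycle off `β`, the vertex
sequence of `a` decomposes at the *last* occurrence of `β` as `A₁ ++ [β] ++ A₂`,
the couple is canonical (either `a` is also a cycle off `β`, or no vertex other than
`β` visited by `a` strictly before the last occurrence of `β` is visited by `b`),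
and `w` is obtained by replacing that last occurrence of `β` by the whole
vertex sequence of `b`. -/
def IsNest (a b w : QWalk V E) : Prop :=
  ∃ (β : V) (A₁ A₂ : List V),
    b.first = β ∧ b.last = β ∧
    a.verts = A₁ ++ β :: A₂ ∧ β ∉ A₂ ∧
    (a.IsCycleOff β ∨ ∀ v ∈ A₁, v ≠ β → v ∉ b.verts) ∧
    w.verts = A₁ ++ b.verts ++ A₂

/-- Nesting extended by the convention that nesting with a trivial walk acts as the
identity: `(μ) ⊙ w = w ⊙ (μ) = w` for any walk `w` visiting `μ`. -/
def IsNestE (a b w : QWalk V E) : Prop :=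
  IsNest a b w ∨ (a.Trivial ∧ a.first ∈ b.verts ∧ w = b)

end QWalk

/-!
Induction on the length. Let `γ` be the first vertex of a walk that is visited twice, and cut
the walk at the first and the last visit of `γ`. The vertices visited before `γ` are visited
nowhere else, so the walk is the canonical nesting product of the loop between the two visits
and of the walk with that loop removed; both are shorter unless the walk is the loop itself.
In that exceptional case the walk is a cycle off `γ` which, not being simple, either visits `γ`
in between, making it the nesting product of two cycles off `γ`, or has a repeated internal
vertex, to which the same cut applies.
-/

namespace List

variable {α : Type*}

theorem exists_split_at_last_occurrence {a : α} {l : List α} (h : a ∈ l) :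
    ∃ s t, l = s ++ a :: t ∧ a ∉ t := by
  induction l with
  | nil => cases h
  | cons b l ih =>
    by_cases hl : a ∈ l
    · obtain ⟨s, t, rfl, ht⟩ := ih hl
      exact ⟨b :: s, t, rfl, ht⟩
    · obtain rfl : a = b := (mem_cons.mp h).resolve_right hl
      exact ⟨[], l, rfl, hl⟩

theorem exists_split_at_first_dup {l : List α} (h : ¬ l.Nodup) :
    ∃ P Q R γ, l = P ++ γ :: Q ++ γ :: R ∧
      (∀ v ∈ P, v ∉ γ :: Q ++ γ :: R) ∧ γ ∉ R := by
  induction l with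
  | nil => simp at h
  | cons x l ih =>
    by_cases hx : x ∈ l
    · obtain ⟨s, t, rfl, ht⟩ := exists_split_at_last_occurrence hx
      exact ⟨[], s, t, x, by simp, by simp, ht⟩
    · obtain ⟨P, Q, R, γ, rfl, hP, hR⟩ := ih fun hl => h (nodup_cons.mpr ⟨hx, hl⟩)
      refine ⟨x :: P, Q, R, γ, rfl, ?_, hR⟩
      rintro v (_ | ⟨_, hv⟩) hvl
      · exact hx (by simp only [mem_append, mem_cons] at hvl ⊢; tauto)
      · exact hP v hv hvl

theorem IsChain.excise_loop {R : α → α → Prop} {A Q C : List α} {γ : α}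
    (h : (A ++ (γ :: Q ++ [γ]) ++ C).IsChain R) :
    (A ++ γ :: C).IsChain R ∧ (γ :: Q ++ [γ]).IsChain R := by
  rw [show A ++ (γ :: Q ++ [γ]) ++ C = A ++ γ :: (Q ++ γ :: C) by simp, isChain_split] at h
  obtain ⟨hA, hQC⟩ := h
  rw [← cons_append, isChain_split] at hQC
  exact ⟨isChain_split.mpr ⟨hA, hQC.2⟩, hQC.1⟩

/-- A list with a repeated entry that is not a loop `γ :: L ++ [γ]` with `L` duplicate-free
splits off a loop `γ :: Q ++ [γ]` in the way a nesting product does. -/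
theorem exists_loop_split {l : List α} (hnd : ¬ l.Nodup)
    (hcyc : ∀ h : l ≠ [], l.head h = l.getLast h → ¬ l.tail.Nodup) :
    ∃ A Q C γ, l = A ++ (γ :: Q ++ [γ]) ++ C ∧ γ ∉ C ∧ A ++ C ≠ [] ∧
      ((∃ A', A = γ :: A' ∧ C = []) ∨ ∀ v ∈ A, v ∉ γ :: Q) := by
  obtain ⟨P, Q, R, γ, rfl, hP, hR⟩ := exists_split_at_first_dup hnd
  by_cases hPR : P ++ R = []
  · obtain ⟨rfl, rfl⟩ := append_eq_nil_iff.mp hPR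
    have hQγ : ¬ (Q ++ [γ]).Nodup := hcyc (by simp) (by simp)
    by_cases hγ : γ ∈ Q
    · obtain ⟨M₁, M₂, rfl⟩ := append_of_mem hγ
      exact ⟨γ :: M₁, M₂, [], γ, by simp, not_mem_nil, by simp, Or.inl ⟨M₁, rfl, rfl⟩⟩
    · have hQ : ¬ Q.Nodup := fun hQ =>
        hQγ (concat_eq_append ▸ (nodup_concat Q γ).mpr ⟨hγ, hQ⟩)
      obtain ⟨P', Q', R', δ, rfl, hP', hR'⟩ := exists_split_at_first_dup hQ
      have hδ : δ ≠ γ := by rintro rfl; simp at hγ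
      refine ⟨γ :: P', Q', R' ++ [γ], δ, by simp, by simp [hR', hδ], by simp, Or.inr ?_⟩
      rintro v (_ | ⟨_, hv⟩) hvQ
      · exact hγ (by simp only [mem_append, mem_cons] at hvQ ⊢; tauto)
      · exact hP' v hv (by simp only [mem_append, mem_cons] at hvQ ⊢; tauto)
  · refine ⟨P, Q, R, γ, by simp, hR, hPR, Or.inr fun v hv hvQ => hP v hv ?_⟩
    simp only [mem_append, mem_cons] at hvQ ⊢
    tauto

end List

namespace QWalk

variable {V : Type} {E : V → V → Prop}

theorem exists_isNest_of_verts_eq {w : QWalk V E} {A Q C : List V} {γ : V}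
    (hw : w.verts = A ++ (γ :: Q ++ [γ]) ++ C) (hγ : γ ∉ C)
    (hcanon : (∃ A', A = γ :: A' ∧ C = []) ∨ ∀ v ∈ A, v ∉ γ :: Q) :
    ∃ a b : QWalk V E, a.verts = A ++ γ :: C ∧ b.verts = γ :: Q ++ [γ] ∧ IsNest a b w := by
  have hchain : (A ++ (γ :: Q ++ [γ]) ++ C).IsChain E := hw ▸ w.chain
  obtain ⟨ha, hb⟩ := hchain.excise_loop
  let a : QWalk V E := ⟨A ++ γ :: C, by simp, ha⟩
  let b : QWalk V E := ⟨γ :: Q ++ [γ], by simp, hb⟩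
  refine ⟨a, b, rfl, rfl, γ, A, C, rfl, by simp [b, last], rfl, hγ, ?_, by simp [b, hw]⟩
  rcases hcanon with ⟨A', rfl, rfl⟩ | hA
  · exact Or.inl ⟨by simp [a, IsCycle, first, last], rfl⟩
  · refine Or.inr fun v hv _ hvb => hA v hv ?_
    simp only [b, List.mem_append, List.mem_cons] at hvb ⊢
    tauto

theorem exists_isNest_of_not_isSimplePath_of_not_isSimpleCycle (w : QWalk V E)
    (hp : ¬ w.IsSimplePath) (hc : ¬ w.IsSimpleCycle) :
    ∃ a b : QWalk V E, a.len < w.len ∧ b.len < w.len ∧ IsNest a b w := by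
  obtain ⟨A, Q, C, γ, hw, hγ, hAC, hcanon⟩ :=
    List.exists_loop_split hp fun _ hfl hnd => hc ⟨hfl, hnd⟩
  obtain ⟨a, b, ha, hb, hab⟩ := exists_isNest_of_verts_eq hw hγ hcanon
  have hAC : 0 < A.length + C.length := List.length_append ▸ List.length_pos_iff.mpr hAC
  refine ⟨a, b, ?_, ?_, hab⟩ <;> simp only [len, ha, hb, hw, List.length_append,
    List.length_cons, List.length_nil] <;> omega

end QWalk

theorem stmt2_general {V : Type} (E : V → V → Prop) (w : QWalk V E)
    (S : Set (QWalk V E))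
    (hpath : ∀ p : QWalk V E, p.IsSimplePath → p ∈ S)
    (hcyc : ∀ c : QWalk V E, c.IsSimpleCycle → c ∈ S)
    (hclosed : ∀ a b u : QWalk V E, a ∈ S → b ∈ S → QWalk.IsNest a b u → u ∈ S) :
    w ∈ S := by
  induction hn : w.len using Nat.strong_induction_on generalizing w with
  | _ n ih =>
  by_cases hp : w.IsSimplePath
  · exact hpath w hp
  by_cases hc : w.IsSimpleCycle
  · exact hcyc w hc
  obtain ⟨a, b, ha, hb, hab⟩ := w.exists_isNest_of_not_isSimplePath_of_not_isSimpleCycle hp hc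
  exact hclosed a b w (ih _ (hn ▸ ha) a rfl) (ih _ (hn ▸ hb) b rfl) hab

/-- Every walk on a finite quiver belongs to every set of walks that
contains all simple paths and all simple cycles and is closed under defined nesting
products; i.e. every walk belongs to the smallest such set, so it is obtained from
simple paths and simple cycles by finitely many nesting products. -/
theorem stmt2 {V : Type} [Fintype V] (E : V → V → Prop) (w : QWalk V E)
    (S : Set (QWalk V E))
    (hpath : ∀ p : QWalk V E, p.IsSimplePath → p ∈ S)
    (hcyc : ∀ c : QWalk V E, c.IsSimpleCycle → c ∈ S)
    (hclosed : ∀ a b u : QWalk V E, a ∈ S → b ∈ S → QWalk.IsNest a b u → u ∈ S) :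
    w ∈ S :=
  stmt2_general E w S hpath hcyc hclosed
end

section
/- Let G be a finite quiver and let w be a walk from α to ω on G. Then there exist a unique simple path π = (ν0 ν1 ⋯ νp) of G with ν0 = α and νp = ω (the trivial path if α = ω), and unique cycles s0, s1, …, sp, where sj is a possibly trivial cycle off νj lying entirely in the deleted subquiver G ∖ {ν0, …, ν(j−1)}, such that w = (((π ⊙ sp) ⊙ s(p−1)) ⊙ ⋯ ) ⊙ s0, where every nesting by a nontrivial sj is a defined (canonical) nesting product and nesting by a trivial sj acts as the identity. -/
namespace QWalk

/-- Left-folded extended nesting product along a list: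
`LNestE a [b₁, …, bₖ] w` means `(((a ⊙ b₁) ⊙ b₂) ⊙ ⋯) ⊙ bₖ = w`, every nesting by a
nontrivial factor being a defined (canonical) nesting product and nesting by a trivial
factor acting as the identity. -/
inductive LNestE {V : Type} {E : V → V → Prop} :
    QWalk V E → List (QWalk V E) → QWalk V E → Prop
  | nil (a : QWalk V E) : LNestE a [] a
  | cons {a b u w : QWalk V E} {l : List (QWalk V E)} :
      IsNestE a b u → LNestE u l w → LNestE a (b :: l) w

end QWalk

/-!
Unfolding the nestings shows that `w` is the concatenation `s₀ s₁ ⋯ sₚ` of the vertex sequences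
of the cycles: since `sⱼ` avoids `ν₀, …, νⱼ₋₁`, the last occurrence of `νⱼ` in the partial product
is the one on `π`, and nesting products are deterministic. Conversely, such a concatenation is
forced: `ν₀ = α` occurs in no later `sⱼ`, so `s₀` is the prefix of `w` up to its last visit to `α`,
and the remaining cycles decompose the rest of `w`, which starts at a successor of `α`.
-/

namespace List

variable {α : Type*}

theorem exists_eq_append_cons_notMem_of_mem {a : α} {l : List α} (h : a ∈ l) :
    ∃ D T, l = D ++ a :: T ∧ a ∉ T := by
  induction l with
  | nil => cases h
  | cons b l ih =>
    by_cases hl : a ∈ l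
    · obtain ⟨D, T, rfl, hT⟩ := ih hl
      exact ⟨b :: D, T, rfl, hT⟩
    · obtain rfl : a = b := (mem_cons.mp h).resolve_right hl
      exact ⟨[], l, rfl, hl⟩

theorem append_cons_inj_of_notMem_right {a : α} {D₁ D₂ T₁ T₂ : List α}
    (h : D₁ ++ a :: T₁ = D₂ ++ a :: T₂) (h₁ : a ∉ T₁) (h₂ : a ∉ T₂) :
    D₁ = D₂ ∧ T₁ = T₂ := by
  induction D₁ generalizing D₂ with
  | nil =>
    cases D₂ with
    | nil => simpa using h
    | cons d D₂ =>
      simp only [nil_append, cons_append, cons.injEq] at h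
      exact absurd (h.2 ▸ mem_append_right _ mem_cons_self) h₁
  | cons d D₁ ih =>
    cases D₂ with
    | nil =>
      simp only [nil_append, cons_append, cons.injEq] at h
      exact absurd (h.2 ▸ mem_append_right _ mem_cons_self) h₂
    | cons e D₂ =>
      simp only [cons_append, cons.injEq] at h
      obtain ⟨hD, hT⟩ := ih h.2
      exact ⟨by rw [h.1, hD], hT⟩

end List

namespace QWalk

variable {V : Type} {E : V → V → Prop}

theorem ext {a b : QWalk V E} (h : a.verts = b.verts) : a = b := by
  cases a; cases b; simpa using h

theorem first_mem (w : QWalk V E) : w.first ∈ w.verts := List.head_mem _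

theorem first_eq_of_verts_eq_cons {w : QWalk V E} {x : V} {l : List V}
    (h : w.verts = x :: l) : w.first = x := by
  simp [first, h]

theorem first_eq_of_verts_eq_append {w w' : QWalk V E} {l : List V}
    (h : w.verts = w'.verts ++ l) : w.first = w'.first := by
  simp only [first, h]
  exact List.head_append_of_ne_nil _

theorem last_eq_of_verts_eq_append {w w' : QWalk V E} {l : List V}
    (h : w.verts = l ++ w'.verts) : w.last = w'.last := by
  simp only [last, h]
  exact List.getLast_append_of_ne_nil _ _

theorem verts_eq_of_trivial {w : QWalk V E} (h : w.Trivial) : w.verts = [w.first] := by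
  have hlen : w.verts.length = 1 := by
    have := List.length_pos_iff.mpr w.ne
    unfold Trivial len at h
    omega
  obtain ⟨x, hx⟩ := List.length_eq_one_iff.mp hlen
  rw [hx, first_eq_of_verts_eq_cons hx]

theorem IsNest.unique {a b u u' : QWalk V E} (h : IsNest a b u) (h' : IsNest a b u') :
    u = u' := by
  obtain ⟨β, A₁, A₂, rfl, -, ha, hβ, -, hu⟩ := h
  obtain ⟨-, A₁', A₂', rfl, -, ha', hβ', -, hu'⟩ := h'
  obtain ⟨rfl, rfl⟩ := List.append_cons_inj_of_notMem_right (ha.symm.trans ha') hβ hβ'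
  exact ext (hu.trans hu'.symm)

theorem IsNest.eq_of_trivial {a b u : QWalk V E} (h : IsNest a b u) (ha : a.Trivial) :
    u = b := by
  obtain ⟨β, A₁, A₂, -, -, hav, -, -, hu⟩ := h
  rw [verts_eq_of_trivial ha] at hav
  obtain ⟨rfl, rfl⟩ : A₁ = [] ∧ A₂ = [] := by
    cases A₁ <;> simp_all
  exact ext (by simpa using hu)

theorem IsNestE.unique {a b u u' : QWalk V E} (h : IsNestE a b u) (h' : IsNestE a b u') :
    u = u' := by
  rcases h with h | ⟨ha, -, rfl⟩ <;> rcases h' with h' | ⟨ha', -, rfl⟩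
  · exact h.unique h'
  · exact h.eq_of_trivial ha'
  · exact (h'.eq_of_trivial ha).symm
  · rfl

theorem LNestE.unique {a w w' : QWalk V E} {l : List (QWalk V E)} (h : LNestE a l w)
    (h' : LNestE a l w') : w = w' := by
  induction h with
  | nil => cases h'; rfl
  | cons hn _ ih =>
    obtain _ | ⟨hn', hl'⟩ := h'
    exact ih (hn.unique hn' ▸ hl')

theorem LNestE.append_singleton {a u b w : QWalk V E} {l : List (QWalk V E)}
    (h : LNestE a l u) (hb : IsNestE u b w) : LNestE a (l ++ [b]) w := by
  induction h with
  | nil => exact .cons hb (.nil _)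
  | cons hn _ ih => exact .cons hn (ih hb)

theorem IsCycleOff.verts_eq {s : QWalk V E} {β : V} (h : s.IsCycleOff β) :
    s.verts = s.verts.dropLast ++ [β] := by
  rw [← h.2, h.1]
  exact (List.dropLast_append_getLast s.ne).symm

theorem exists_verts_eq_nest {a b : QWalk V E} {β : V} {A₁ A₂ : List V}
    (ha : a.verts = A₁ ++ β :: A₂) (hb : b.IsCycleOff β) :
    ∃ u : QWalk V E, u.verts = A₁ ++ b.verts ++ A₂ := by
  have hA := List.isChain_split.mp (ha ▸ a.chain)
  have hhead : b.verts = β :: b.verts.tail := hb.2 ▸ (List.cons_head_tail b.ne).symm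
  have hend := hb.verts_eq
  have hAb : (A₁ ++ b.verts).IsChain E := by
    rw [hhead]
    exact List.isChain_split.mpr ⟨hA.1, hhead ▸ b.chain⟩
  refine ⟨⟨A₁ ++ b.verts ++ A₂, by simp [b.ne], ?_⟩, rfl⟩
  have hsplit : A₁ ++ b.verts ++ A₂ = (A₁ ++ b.verts.dropLast) ++ β :: A₂ := by
    conv_lhs => rw [hend]
    simp
  rw [hsplit]
  exact List.isChain_split.mpr ⟨by rwa [List.append_assoc, ← hend], hA.2⟩

/-- `IsCycleSeq [ν₀, …, νₚ] [s₀, …, sₚ]`: each `sⱼ` is a cycle off `νⱼ` in `G ∖ {ν₀, …, νⱼ₋₁}`. -/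
inductive IsCycleSeq : List V → List (QWalk V E) → Prop
  | nil : IsCycleSeq [] []
  | cons {ν : V} {P : List V} {s : QWalk V E} {ss : List (QWalk V E)} :
      s.IsCycleOff ν → (∀ t ∈ ss, ν ∉ t.verts) → IsCycleSeq P ss →
        IsCycleSeq (ν :: P) (s :: ss)

theorem isCycleSeq_iff {P : List V} {ss : List (QWalk V E)} :
    IsCycleSeq P ss ↔ ss.length = P.length ∧
      ∀ (j : ℕ) (s : QWalk V E) (ν : V), ss[j]? = some s → P[j]? = some ν →
        s.IsCycleOff ν ∧ ∀ v ∈ s.verts, v ∉ P.take j := by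
  constructor
  · intro h
    induction h with
    | nil => simp
    | cons hs havoid _ ih =>
      refine ⟨by simp [ih.1], ?_⟩
      rintro (_ | j) t μ ht hμ
      · simp only [List.getElem?_cons_zero, Option.some.injEq] at ht hμ
        subst ht hμ
        exact ⟨hs, by simp⟩
      · simp only [List.getElem?_cons_succ, List.take_succ_cons] at ht hμ ⊢
        obtain ⟨hc, hv⟩ := ih.2 j t μ ht hμ
        refine ⟨hc, fun v hvt hmem => ?_⟩
        rcases List.mem_cons.mp hmem with rfl | hmem
        · exact havoid t (List.mem_of_getElem? ht) hvt
        · exact hv v hvt hmem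
  · rintro ⟨hlen, hcyc⟩
    induction P generalizing ss with
    | nil => rw [List.length_eq_zero_iff.mp hlen]; exact .nil
    | cons ν P ih =>
      obtain _ | ⟨s, ss⟩ := ss
      · simp at hlen
      simp only [List.length_cons, add_left_inj] at hlen
      refine .cons (hcyc 0 s ν rfl rfl).1 ?_ (ih hlen fun j t μ ht hμ => ?_)
      · intro t ht hν
        obtain ⟨j, hj, rfl⟩ := List.getElem_of_mem ht
        exact (hcyc (j + 1) _ (P[j]'(hlen ▸ hj)) (by simp) (by simp)).2 ν hν (by simp)
      · obtain ⟨hc, hv⟩ := hcyc (j + 1) t μ (by simpa using ht) (by simpa using hμ)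
        exact ⟨hc, fun v hvt hmem => hv v hvt (by simp [hmem])⟩

theorem IsCycleSeq.eq_map_first {P : List V} {ss : List (QWalk V E)} (h : IsCycleSeq P ss) :
    P = ss.map first := by
  induction h with
  | nil => rfl
  | cons hs _ _ ih => rw [ih, ← hs.2, List.map_cons]

theorem IsCycleSeq.nodup {P : List V} {ss : List (QWalk V E)} (h : IsCycleSeq P ss) :
    P.Nodup := by
  induction h with
  | nil => exact List.nodup_nil
  | @cons ν P s ss _ havoid hseq ih =>
    refine List.nodup_cons.mpr ⟨fun hν => ?_, ih⟩
    obtain ⟨t, ht, rfl⟩ := List.mem_map.mp (hseq.eq_map_first ▸ hν)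
    exact havoid t ht t.first_mem

theorem IsCycleSeq.exists_lNestE {P : List V} {ss : List (QWalk V E)} (h : IsCycleSeq P ss)
    (A : List V) (a : QWalk V E) (ha : a.verts = A ++ P) (hA : ∀ s ∈ ss, ∀ v ∈ A, v ∉ s.verts) :
    ∃ u : QWalk V E, u.verts = A ++ (ss.map verts).flatten ∧ LNestE a ss.reverse u := by
  induction h generalizing A with
  | nil => exact ⟨a, by simpa using ha, .nil a⟩
  | @cons ν P s ss hs havoid _ ih =>
    have hA' : ∀ t ∈ ss, ∀ v ∈ A ++ [ν], v ∉ t.verts := by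
      intro t ht v hv
      rcases List.mem_append.mp hv with hv | hv
      · exact hA t (List.mem_cons_of_mem _ ht) v hv
      · exact (List.mem_singleton.mp hv) ▸ havoid t ht
    obtain ⟨u', hu', hnest⟩ := ih (A ++ [ν]) (by simpa using ha) hA'
    rw [List.append_assoc, List.singleton_append] at hu'
    obtain ⟨u, hu⟩ := exists_verts_eq_nest hu' hs
    have hν : ν ∉ (ss.map verts).flatten := by simpa using havoid
    refine ⟨u, by simpa using hu, ?_⟩
    rw [List.reverse_cons]
    exact hnest.append_singleton <| .inl ⟨ν, A, _, hs.2, hs.1.symm.trans hs.2, hu', hν,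
      .inr fun v hv _ => hA s List.mem_cons_self v hv, hu⟩

theorem IsCycleSeq.flatten_eq_of_lNestE {π w : QWalk V E} {ss : List (QWalk V E)}
    (h : IsCycleSeq π.verts ss) (hw : LNestE π ss.reverse w) :
    (ss.map verts).flatten = w.verts := by
  obtain ⟨u, hu, hnest⟩ := h.exists_lNestE [] π rfl (by simp)
  rw [← hnest.unique hw, hu, List.nil_append]

theorem IsCycleSeq.eq_of_flatten_eq {P₁ P₂ : List V} {ss₁ ss₂ : List (QWalk V E)}
    (h₁ : IsCycleSeq P₁ ss₁) (h₂ : IsCycleSeq P₂ ss₂)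
    (h : (ss₁.map verts).flatten = (ss₂.map verts).flatten) : ss₁ = ss₂ := by
  induction h₁ generalizing P₂ ss₂ with
  | nil =>
    cases h₂ with
    | nil => rfl
    | cons => simp [QWalk.ne] at h
  | @cons ν P s ss hs havoid _ ih =>
    cases h₂ with
    | nil => simp [QWalk.ne] at h
    | @cons ν' P' s' ss' hs' havoid' h₂ =>
      simp only [List.map_cons, List.flatten_cons] at h
      have hfirst : s.first = s'.first := by
        have hhead := congrArg List.head? h
        rw [List.head?_append_of_ne_nil _ s.ne, List.head?_append_of_ne_nil _ s'.ne,
          List.head?_eq_some_head s.ne, List.head?_eq_some_head s'.ne] at hhead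
        exact Option.some.inj hhead
      obtain rfl : ν = ν' := hs.2.symm.trans (hfirst.trans hs'.2)
      rw [hs.verts_eq, hs'.verts_eq, List.append_assoc, List.append_assoc,
        List.singleton_append, List.singleton_append] at h
      obtain ⟨hD, hF⟩ := List.append_cons_inj_of_notMem_right h (by simpa using havoid)
        (by simpa using havoid')
      obtain rfl : s = s' := ext (by rw [hs.verts_eq, hs'.verts_eq, hD])
      rw [ih h₂ hF]

theorem exists_isCycleSeq (w : QWalk V E) :
    ∃ (π : QWalk V E) (ss : List (QWalk V E)), π.first = w.first ∧ π.last = w.last ∧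
      IsCycleSeq π.verts ss ∧ (ss.map verts).flatten = w.verts := by
  induction hn : w.verts.length using Nat.strong_induction_on generalizing w with
  | _ n ih =>
  obtain ⟨D, T, hw, hT⟩ := List.exists_eq_append_cons_notMem_of_mem w.first_mem
  have hchain := List.isChain_split.mp (hw ▸ w.chain)
  let s : QWalk V E := ⟨D ++ [w.first], by simp, hchain.1⟩
  have hws : w.verts = s.verts ++ T := by simp [hw, s]
  have hs : s.IsCycleOff w.first := by
    have hfirst : w.first = s.first := first_eq_of_verts_eq_append hws
    exact ⟨hfirst.symm.trans (List.getLast_concat ..).symm, hfirst.symm⟩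
  cases T with
  | nil =>
    have hlast : w.last = w.first := by
      rw [show w = s from ext (by simpa using hws)]
      exact hs.1.symm
    refine ⟨⟨[w.first], by simp, .singleton _⟩, [s], rfl, hlast.symm, .cons hs (by simp) .nil,
      by simpa using hws.symm⟩
  | cons x T =>
    let w' : QWalk V E := ⟨x :: T, by simp, hchain.2.tail⟩
    obtain ⟨π', ss, hfirst, hlast, hseq, hflat⟩ :=
      ih _ (by simp [← hn, hw, w']; omega) w' rfl
    have hedge : E w.first π'.first := hfirst ▸ (List.isChain_cons_cons.mp hchain.2).1
    let π : QWalk V E := ⟨w.first :: π'.verts, by simp,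
      π'.chain.cons_of_ne_nil π'.ne hedge⟩
    refine ⟨π, s :: ss, rfl, ?_, .cons hs ?_ hseq, by simp [hflat, w', hws]⟩
    · rw [last_eq_of_verts_eq_append (l := [w.first]) rfl, hlast]
      exact (last_eq_of_verts_eq_append hws).symm
    · intro t ht hmem
      exact hT (show w.first ∈ w'.verts from
        hflat ▸ List.mem_flatten_of_mem (List.mem_map_of_mem ht) hmem)

end QWalk

theorem stmt8_general {V : Type} (E : V → V → Prop) (α ω : V)
    (w : QWalk V E) (hα : w.first = α) (hω : w.last = ω) :
    ∃! pss : QWalk V E × List (QWalk V E),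
      pss.1.IsSimplePath ∧ pss.1.first = α ∧ pss.1.last = ω ∧
      pss.2.length = pss.1.verts.length ∧
      (∀ (j : ℕ) (s : QWalk V E) (ν : V),
        pss.2[j]? = some s → pss.1.verts[j]? = some ν →
          s.IsCycleOff ν ∧ ∀ v ∈ s.verts, v ∉ pss.1.verts.take j) ∧
      QWalk.LNestE pss.1 pss.2.reverse w := by
  obtain ⟨π, ss, hfirst, hlast, hseq, hflat⟩ := w.exists_isCycleSeq
  obtain ⟨u, hu, hnest⟩ := hseq.exists_lNestE [] π rfl (by simp)
  obtain rfl : u = w := QWalk.ext (hu.trans hflat)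
  obtain ⟨hlen, hcyc⟩ := QWalk.isCycleSeq_iff.mp hseq
  refine ⟨(π, ss), ⟨hseq.nodup, hfirst.trans hα, hlast.trans hω, hlen, hcyc, hnest⟩, ?_⟩
  rintro ⟨π', ss'⟩ ⟨-, -, -, hlen', hcyc', hnest'⟩
  have hseq' : QWalk.IsCycleSeq π'.verts ss' := QWalk.isCycleSeq_iff.mpr ⟨hlen', hcyc'⟩
  obtain rfl : ss' = ss :=
    hseq'.eq_of_flatten_eq hseq ((hseq'.flatten_eq_of_lNestE hnest').trans hflat.symm)
  obtain rfl : π' = π := QWalk.ext (by rw [hseq'.eq_map_first, hseq.eq_map_first])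
  rfl

/-- Every walk `w` from `α` to `ω` on a finite quiver factorizes as
`w = (((π ⊙ s_p) ⊙ s_{p-1}) ⊙ ⋯) ⊙ s_0` for a *unique* simple path
`π = (ν₀ ν₁ ⋯ ν_p)` from `α` to `ω` and *unique* (possibly trivial) cycles
`s_j` off `ν_j` lying entirely in the deleted subquiver `G ∖ {ν₀, …, ν_{j-1}}`. -/
theorem stmt8 {V : Type} [Fintype V] (E : V → V → Prop) (α ω : V)
    (w : QWalk V E) (hα : w.first = α) (hω : w.last = ω) :
    ∃! pss : QWalk V E × List (QWalk V E),
      pss.1.IsSimplePath ∧ pss.1.first = α ∧ pss.1.last = ω ∧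
      pss.2.length = pss.1.verts.length ∧
      (∀ (j : ℕ) (s : QWalk V E) (ν : V),
        pss.2[j]? = some s → pss.1.verts[j]? = some ν →
          s.IsCycleOff ν ∧ ∀ v ∈ s.verts, v ∉ pss.1.verts.take j) ∧
      QWalk.LNestE pss.1 pss.2.reverse w :=
  stmt8_general E α ω w hα hω
end

section
/- Path-sum formula for walks: let G be a finite quiver with vertex set V and let α, ω ∈ V. Then, in the ring ℚ[[z]] of formal power series, the generating function Σ_{n≥0} c_n z^n, where c_n is the number of walks of length n from α to ω on G, equals Σ_π z^p · Π_{i=0}^{p} F_{V∖{σ0,…,σ(i−1)}}(σi), the sum running over all simple paths π = (σ0 σ1 ⋯ σp) of G with σ0 = α and σp = ω (for α = ω the only such π is the trivial path, of length p = 0). -/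
/-- The number of walks of length `n` from `α` to `ω` on the quiver with edge
relation `E`: walks are recorded by their vertex sequences, lists of `n + 1`
vertices starting at `α`, ending at `ω`, with consecutive vertices joined by edges. -/
noncomputable def nWalks {V : Type} (E : V → V → Prop) (n : ℕ) (α ω : V) : ℕ :=
  Nat.card {L : List V // L.length = n + 1 ∧ L.head? = some α ∧
    L.getLast? = some ω ∧ L.Chain' E}

/-- Given a family `F` of dressed-vertex series, `dressProd F T [σ₀, …, σₖ]` is the
product `F T σ₀ · F (T ∖ {σ₀}) σ₁ ⋯ F (T ∖ {σ₀, …, σ_{k-1}}) σₖ`. -/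
noncomputable def dressProd {V : Type} [DecidableEq V]
    (F : Finset V → V → PowerSeries ℚ) : Finset V → List V → PowerSeries ℚ
  | _, [] => 1
  | T, v :: r => F T v * dressProd F (T.erase v) r

/-- Fuel-graded version of the dressed-vertex series `F_S(α)`:
`F_S(α) = (1 − Σ_γ z^m · F_{S∖{α}}(μ₂) ⋯ F_{S∖{α,μ₂,…,μ_{m-1}}}(μ_m))⁻¹`,
the sum running over all nontrivial simple cycles `γ = (α μ₂ ⋯ μ_m α)` of the
induced subquiver `G[S]`, recorded by their lists `[μ₂, …, μ_m]` of internal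
vertices (of length `m − 1`). -/
noncomputable def dressFAux {V : Type} [DecidableEq V] (E : V → V → Prop) :
    ℕ → Finset V → V → PowerSeries ℚ
  | 0, _, _ => 1
  | n + 1, S, α =>
      (1 - ∑ᶠ c ∈ {c : List V | c.Nodup ∧ α ∉ c ∧ (∀ v ∈ c, v ∈ S) ∧
            List.Chain E α (c ++ [α])},
          (PowerSeries.X : PowerSeries ℚ) ^ (c.length + 1) *
            dressProd (dressFAux E n) (S.erase α) c)⁻¹

/-- The dressed-vertex series `F_S(α)` of the vertex `α` on the induced subquiver
`G[S]`.  (The fuel `S.card` is enough for the recursion to unfold completely.) -/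
noncomputable def dressF {V : Type} [DecidableEq V] (E : V → V → Prop)
    (S : Finset V) (α : V) : PowerSeries ℚ :=
  dressFAux E S.card S α

/-!
Let `W_S(α, ω)` count the walks from `α` to `ω` whose vertices after `α` lie in `S ∋ α`.
Cutting a walk at its first return to `α` gives `W = A + R · W`, where `A` counts the walks
that never come back to `α` and `R` the first-return loops at `α`. Removing the first step of a
walk avoiding `α`, or the first and last steps of a first-return loop, leaves a walk in
`S ∖ {α}`; so by induction on `S`, `A` and `R` are the sums over the simple paths and simple
cycles leaving `α`, weighted by the dressed-vertex series on `S ∖ {α}`. Thus `R` is the cycle sum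
in `F_S(α) = (1 - R)⁻¹`, and `W = F_S(α) · A` is the path sum.
-/

open PowerSeries

section CountGF

variable (R : Type*) [Semiring R] {A B : Type*}

noncomputable def countGF (w : A → ℕ) : R⟦X⟧ :=
  mk fun n => Nat.card {a // w a = n}

variable {R}

theorem countGF_congr (e : A ≃ B) {wA : A → ℕ} {wB : B → ℕ} (h : ∀ a, wB (e a) = wA a) :
    countGF R wB = countGF R wA := by
  ext n
  simp only [countGF, coeff_mk]
  exact congrArg _ (Nat.card_congr (e.subtypeEquiv fun a => by rw [h])).symm

theorem countGF_eq_one [Unique A] {w : A → ℕ} (h : w default = 0) : countGF R w = 1 := by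
  ext n
  rcases n.eq_zero_or_pos with rfl | hn
  · have : Unique {a // w a = 0} := ⟨⟨default, h⟩, fun a => Subtype.ext (Unique.eq_default a.1)⟩
    simp [countGF]
  · have : IsEmpty {a // w a = n} := ⟨fun a => by
      have := Unique.eq_default a.1; have := a.2; simp_all⟩
    simp [countGF, coeff_one, hn.ne']

theorem countGF_add_one (w : A → ℕ) : countGF R (fun a => w a + 1) = X * countGF R w := by
  ext (_ | n)
  · simp [countGF]
  · simp only [countGF, coeff_mk, coeff_succ_X_mul, Nat.add_right_cancel_iff]

theorem countGF_sum (wA : A → ℕ) (wB : B → ℕ) [∀ n, Finite {a // wA a = n}]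
    [∀ n, Finite {b // wB b = n}] :
    countGF R (Sum.elim wA wB) = countGF R wA + countGF R wB := by
  ext n
  simp only [countGF, coeff_mk, map_add, ← Nat.cast_add, ← Nat.card_sum]
  exact congrArg _ (Nat.card_congr Equiv.subtypeSum)

theorem countGF_subtype_eq_add (P Q : A → Prop) (w : A → ℕ)
    [∀ n, Finite {a : {a // P a ∧ Q a} // w a = n}]
    [∀ n, Finite {a : {a // P a ∧ ¬ Q a} // w a = n}] :
    countGF R (fun a : {a // P a} => w a) =
      countGF R (fun a : {a // P a ∧ Q a} => w a) +
        countGF R (fun a : {a // P a ∧ ¬ Q a} => w a) := by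
  classical
  rw [← countGF_sum, countGF_congr ((Equiv.sumCompl fun a : {a // P a} => Q a).symm.trans
    (Equiv.sumCongr (Equiv.subtypeSubtypeEquivSubtypeInter P Q)
      (Equiv.subtypeSubtypeEquivSubtypeInter P fun a => ¬ Q a)))]
  intro a
  by_cases h : Q a <;> simp [Equiv.sumCompl, h]

open Finset in
theorem countGF_prod (wA : A → ℕ) (wB : B → ℕ) [∀ n, Finite {a // wA a = n}]
    [∀ n, Finite {b // wB b = n}] :
    countGF R (fun p : A × B => wA p.1 + wB p.2) = countGF R wA * countGF R wB := by
  ext n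
  have e : {p : A × B // wA p.1 + wB p.2 = n} ≃
      Σ ij : antidiagonal n, {a // wA a = ij.1.1} × {b // wB b = ij.1.2} :=
    { toFun := fun p => ⟨⟨(wA p.1.1, wB p.1.2), mem_antidiagonal.2 p.2⟩, ⟨p.1.1, rfl⟩, ⟨p.1.2, rfl⟩⟩
      invFun := fun x => ⟨(x.2.1, x.2.2), by
        rw [x.2.1.2, x.2.2.2]; exact mem_antidiagonal.1 x.1.2⟩
      left_inv := fun p => rfl
      right_inv := by
        rintro ⟨⟨⟨i, j⟩, hij⟩, ⟨a, ha⟩, ⟨b, hb⟩⟩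
        dsimp only at ha hb
        subst ha hb
        rfl }
  simp only [countGF, coeff_mk, coeff_mul, Nat.card_congr e, Nat.card_sigma, Nat.card_prod]
  push_cast
  exact sum_coe_sort (antidiagonal n) fun ij =>
    (Nat.card {a // wA a = ij.1} : R) * Nat.card {b // wB b = ij.2}

theorem countGF_sigma {ι : Type*} [Fintype ι] {A : ι → Type*} (w : ∀ i, A i → ℕ)
    [∀ i n, Finite {a // w i a = n}] :
    countGF R (fun x : Σ i, A i => w x.1 x.2) = ∑ i, countGF R (w i) := by
  ext n
  have e : {x : Σ i, A i // w x.1 x.2 = n} ≃ Σ i, {a // w i a = n} :=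
    { toFun := fun x => ⟨x.1.1, x.1.2, x.2⟩
      invFun := fun y => ⟨⟨y.1, y.2.1⟩, y.2.2⟩
      left_inv := fun _ => rfl
      right_inv := fun _ => rfl }
  simp only [countGF, coeff_mk, map_sum, Nat.card_congr e, Nat.card_sigma]
  push_cast
  rfl

end CountGF

theorem List.append_cons_inj_of_notMem_left {α : Type*} {a : α} {x₁ x₂ z₁ z₂ : List α}
    (h₁ : a ∉ x₁) (h₂ : a ∉ x₂) (h : x₁ ++ a :: z₁ = x₂ ++ a :: z₂) : x₁ = x₂ ∧ z₁ = z₂ := by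
  classical
  have key : ∀ {x z : List α}, a ∉ x → (x ++ a :: z).takeWhile (· ≠ a) = x := fun hx => by
    rw [List.takeWhile_append_of_pos (p := (· ≠ a)) fun b hb => by grind]
    simp
  have hx : x₁ = x₂ := by rw [← key (z := z₁) h₁, ← key (z := z₂) h₂, h]
  subst hx
  exact ⟨rfl, List.cons_injective (List.append_cancel_left h)⟩

section Walks

variable {V : Type} (E : V → V → Prop)

/-- A walk `α :: c` from `α` to `ω` whose vertices after `α` lie in `S` (`α` itself need not);
its length is `c.length`. -/
def IsWalkTail (S : Finset V) (α ω : V) (c : List V) : Prop :=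
  (∀ v ∈ c, v ∈ S) ∧ (α :: c).IsChain E ∧ c.getLastD α = ω

/-- The closed walk `α :: c ++ [α]` in `G[S]` whose only return to `α` is its last step;
its length is `c.length + 1`. -/
def IsFirstReturn (S : Finset V) (α : V) (c : List V) : Prop :=
  α ∉ c ∧ (∀ v ∈ c, v ∈ S) ∧ (α :: (c ++ [α])).IsChain E

variable {E}

theorem isWalkTail_cons_and_notMem_iff [DecidableEq V] {S : Finset V} {α ω β : V}
    {r : List V} :
    (IsWalkTail E S α ω (β :: r) ∧ α ∉ β :: r) ↔
      (β ∈ S.erase α ∧ E α β) ∧ IsWalkTail E (S.erase α) β ω r := by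
  simp only [IsWalkTail, List.mem_cons, forall_eq_or_imp, List.isChain_cons_cons,
    List.getLastD_cons, Finset.mem_erase, not_or]
  grind

theorem IsWalkTail.eq_nil {S : Finset V} {α : V} {c : List V} (h : IsWalkTail E S α α c)
    (hα : α ∉ c) : c = [] := by
  obtain ⟨-, -, h⟩ := h
  cases c using List.reverseRecOn with
  | nil => rfl
  | append_singleton c v => simp_all

theorem IsWalkTail.last_mem {S : Finset V} {α ω : V} {c : List V} (h : IsWalkTail E S α ω c)
    (hα : α ∈ S) : ω ∈ S := by
  rcases List.mem_cons.1 (h.2.2 ▸ List.getLastD_mem_cons (l := c) (a := α)) with h' | h'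
  · exact h' ▸ hα
  · exact h.1 ω h'

theorem isFirstReturn_iff {S : Finset V} {α : V} {c : List V} :
    IsFirstReturn E S α c ↔
      (IsWalkTail E S α (c.getLastD α) c ∧ α ∉ c) ∧ E (c.getLastD α) α := by
  simp only [IsFirstReturn, IsWalkTail, ← List.cons_append, List.isChain_append,
    List.getLast?_cons]
  simp only [List.IsChain.singleton, Option.mem_def, Option.some.injEq, List.head?_cons,
    forall_eq', true_and, and_true, List.getLastD_eq_getLast?]
  tauto

theorem isWalkTail_append_cons_iff {S : Finset V} {α ω : V} {c₁ c₂ : List V} (hα : α ∈ S) :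
    IsWalkTail E S α ω (c₁ ++ α :: c₂) ↔
      ((∀ v ∈ c₁, v ∈ S) ∧ (α :: (c₁ ++ [α])).IsChain E) ∧ IsWalkTail E S α ω c₂ := by
  rw [IsWalkTail, IsWalkTail, List.isChain_cons_split]
  simp only [List.mem_append, List.mem_cons, List.getLastD_eq_getLast?, List.getLast?_append,
    List.getLast?_cons, Option.some_or, Option.getD_some]
  grind

instance [Finite V] (P : List V → Prop) (n : ℕ) :
    Finite {c : {c : List V // P c} // c.1.length = n} :=
  have := (List.finite_length_le V n).to_subtype
  Finite.of_injective (fun c => (⟨c.1.1, c.2.le⟩ : {l : List V | l.length ≤ n}))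
    fun _ _ h => by apply Subtype.ext; apply Subtype.ext; simpa using h

instance [Finite V] (P : List V → Prop) (n : ℕ) :
    Finite {c : {c : List V // P c} // c.1.length + 1 = n} :=
  have := (List.finite_length_le V n).to_subtype
  Finite.of_injective (fun c => (⟨c.1.1, by grind⟩ : {l : List V | l.length ≤ n}))
    fun _ _ h => by apply Subtype.ext; apply Subtype.ext; simpa using h

variable (E)

noncomputable def walkGF (S : Finset V) (α ω : V) : ℚ⟦X⟧ :=
  countGF ℚ fun c : {c // IsWalkTail E S α ω c} => c.1.length

noncomputable def avoidingWalkGF (S : Finset V) (α ω : V) : ℚ⟦X⟧ :=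
  countGF ℚ fun c : {c // IsWalkTail E S α ω c ∧ α ∉ c} => c.1.length

noncomputable def firstReturnGF (S : Finset V) (α : V) : ℚ⟦X⟧ :=
  countGF ℚ fun c : {c // IsFirstReturn E S α c} => c.1.length + 1

variable {E}

theorem avoidingWalkGF_self (S : Finset V) (α : V) : avoidingWalkGF E S α α = 1 := by
  let : Unique {c // IsWalkTail E S α α c ∧ α ∉ c} :=
    { default := ⟨[], ⟨by simp, .singleton α, rfl⟩, by simp⟩
      uniq := fun c => Subtype.ext (c.2.1.eq_nil c.2.2) }
  exact countGF_eq_one rfl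

variable [Finite V]

theorem walkGF_eq_add_mul {S : Finset V} {α : V} (hα : α ∈ S) (ω : V) :
    walkGF E S α ω = avoidingWalkGF E S α ω + firstReturnGF E S α * walkGF E S α ω := by
  classical
  let join (p : {c // IsFirstReturn E S α c} × {c // IsWalkTail E S α ω c}) :
      {c // IsWalkTail E S α ω c ∧ α ∈ c} :=
    ⟨p.1.1 ++ α :: p.2.1, (isWalkTail_append_cons_iff hα).2 ⟨p.1.2.2, p.2.2⟩, by simp⟩
  have hjoin : join.Bijective := by
    refine ⟨fun p q h => ?_, fun c => ?_⟩
    · obtain ⟨h₁, h₂⟩ := List.append_cons_inj_of_notMem_left p.1.2.1 q.1.2.1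
        (congrArg Subtype.val h)
      exact Prod.ext (Subtype.ext h₁) (Subtype.ext h₂)
    · obtain ⟨c₁, c₂, hc₁, hc, -⟩ := List.exists_erase_eq c.2.2
      have hw := (isWalkTail_append_cons_iff hα).1 (hc ▸ c.2.1)
      exact ⟨(⟨c₁, hc₁, hw.1⟩, ⟨c₂, hw.2⟩), Subtype.ext hc.symm⟩
  have hreturning : (countGF ℚ fun c : {c // IsWalkTail E S α ω c ∧ α ∈ c} => c.1.length) =
      firstReturnGF E S α * walkGF E S α ω := by
    rw [countGF_congr (Equiv.ofBijective join hjoin)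
      (wA := fun p => (p.1.1.length + 1) + p.2.1.length) fun p => by simp [join]; omega]
    exact countGF_prod (fun c : {c // IsFirstReturn E S α c} => c.1.length + 1)
      (fun c : {c // IsWalkTail E S α ω c} => c.1.length)
  calc walkGF E S α ω = avoidingWalkGF E S α ω +
        countGF ℚ fun c : {c // IsWalkTail E S α ω c ∧ α ∈ c} => c.1.length := by
        rw [walkGF, countGF_subtype_eq_add (IsWalkTail E S α ω) (α ∈ ·) List.length, add_comm]
        rfl
    _ = _ := by rw [hreturning]

variable [DecidableRel E]

theorem firstReturnGF_eq {S : Finset V} {α : V} (hα : α ∈ S) :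
    firstReturnGF E S α = ∑ γ ∈ S.filter (E · α), X * avoidingWalkGF E S α γ := by
  let forget (x : Σ γ : S.filter (E · α), {c // IsWalkTail E S α γ c ∧ α ∉ c}) :
      {c // IsFirstReturn E S α c} :=
    ⟨x.2.1, by
      obtain ⟨⟨γ, hγ⟩, c, hc⟩ := x
      obtain rfl : c.getLastD α = γ := hc.1.2.2
      exact isFirstReturn_iff.2 ⟨hc, (Finset.mem_filter.1 hγ).2⟩⟩
  have hforget : forget.Bijective := by
    refine ⟨fun x y h => ?_, fun ⟨c, hc⟩ => ?_⟩
    · have hc : x.2.1 = y.2.1 := congrArg Subtype.val h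
      refine Sigma.subtype_ext (Subtype.ext ?_) hc
      rw [← x.2.2.1.2.2, ← y.2.2.1.2.2, hc]
    · obtain ⟨hw, hE⟩ := isFirstReturn_iff.1 hc
      exact ⟨⟨⟨_, Finset.mem_filter.2 ⟨hw.1.last_mem hα, hE⟩⟩, c, hw⟩, rfl⟩
  rw [firstReturnGF, countGF_congr (Equiv.ofBijective forget hforget)
    (wA := fun x => x.2.1.length + 1) fun _ => rfl, ← Finset.sum_coe_sort]
  refine (countGF_sigma fun (γ : S.filter (E · α)) (c : {c // IsWalkTail E S α γ c ∧ α ∉ c}) =>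
    c.1.length + 1).trans ?_
  simp only [countGF_add_one]
  rfl

theorem avoidingWalkGF_of_ne [DecidableEq V] (S : Finset V) {α ω : V} (hω : ω ≠ α) :
    avoidingWalkGF E S α ω =
      ∑ β ∈ (S.erase α).filter (E α), X * walkGF E (S.erase α) β ω := by
  let cons (x : Σ β : (S.erase α).filter (E α), {r // IsWalkTail E (S.erase α) β ω r}) :
      {c // IsWalkTail E S α ω c ∧ α ∉ c} :=
    ⟨x.1.1 :: x.2.1, isWalkTail_cons_and_notMem_iff.2 ⟨Finset.mem_filter.1 x.1.2, x.2.2⟩⟩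
  have hcons : cons.Bijective := by
    refine ⟨fun x y h => ?_, fun ⟨c, hc⟩ => ?_⟩
    · obtain ⟨hβ, hr⟩ := List.cons_eq_cons.1 (congrArg Subtype.val h)
      exact Sigma.subtype_ext (Subtype.ext hβ) hr
    · match c, hc with
      | [], hc => exact absurd hc.1.2.2.symm hω
      | β :: r, hc =>
        obtain ⟨hβ, hr⟩ := isWalkTail_cons_and_notMem_iff.1 hc
        exact ⟨⟨⟨β, Finset.mem_filter.2 hβ⟩, r, hr⟩, rfl⟩
  rw [avoidingWalkGF, countGF_congr (Equiv.ofBijective cons hcons)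
    (wA := fun x => x.2.1.length + 1) fun _ => rfl, countGF_add_one, ← Finset.sum_coe_sort,
    ← Finset.mul_sum]
  exact congrArg _ (countGF_sigma
    fun (β : (S.erase α).filter (E α)) (r : {r // IsWalkTail E (S.erase α) β ω r}) => r.1.length)

end Walks

section PathSums

variable {V : Type} (E : V → V → Prop)

def simplePathTails (S : Finset V) (α ω : V) : Set (List V) :=
  {c | (α :: c).Nodup ∧ IsWalkTail E S α ω c}

variable {E} in
theorem simplePathTails_finite [Fintype V] (S : Finset V) (α ω : V) :
    (simplePathTails E S α ω).Finite :=
  (List.finite_length_le V (Fintype.card V)).subset fun _ hc => hc.1.of_cons.length_le_card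

variable [DecidableEq V]

theorem dressProd_congr {F G : Finset V → V → ℚ⟦X⟧} {T : Finset V} {c : List V} (hc : c.Nodup)
    (hcT : ∀ v ∈ c, v ∈ T) (h : ∀ U ⊆ T, ∀ v ∈ U, F U v = G U v) :
    dressProd F T c = dressProd G T c := by
  induction c generalizing T with
  | nil => rfl
  | cons v r ih =>
    obtain ⟨hvr, hr⟩ := List.nodup_cons.1 hc
    rw [dressProd, dressProd, h T subset_rfl v (hcT v (by simp)),
      ih hr (fun u hu => Finset.mem_erase.2 ⟨fun huv : u = v => hvr (huv ▸ hu),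
        hcT u (by simp [hu])⟩) fun U hU => h U (hU.trans (Finset.erase_subset v T))]

/-- The sum over the simple cycles `α :: c ++ [α]` of `G[S]` in the definition of `dressFAux`. -/
noncomputable def cycleSum (S : Finset V) (α : V) : ℚ⟦X⟧ :=
  ∑ᶠ c ∈ {c | c.Nodup ∧ IsFirstReturn E S α c},
    X ^ (c.length + 1) * dressProd (dressF E) (S.erase α) c

noncomputable def pathSum (S : Finset V) (α ω : V) : ℚ⟦X⟧ :=
  ∑ᶠ c ∈ simplePathTails E S α ω, X ^ c.length * dressProd (dressF E) S (α :: c)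

noncomputable def pathTailSum (S : Finset V) (α ω : V) : ℚ⟦X⟧ :=
  ∑ᶠ c ∈ simplePathTails E S α ω, X ^ c.length * dressProd (dressF E) (S.erase α) c

variable {E}

theorem dressFAux_eq (n : ℕ) {S : Finset V} {α : V} (hα : α ∈ S) (hn : S.card ≤ n) :
    dressFAux E n S α = (1 - cycleSum E S α)⁻¹ := by
  induction n using Nat.strong_induction_on generalizing S α with
  | _ n ih =>
  obtain _ | m := n
  · exact absurd hn (Finset.card_pos.2 ⟨α, hα⟩).not_ge
  have hS : (S.erase α).card ≤ m := by
    have := Finset.card_erase_add_one hα; omega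
  rw [dressFAux, cycleSum]
  refine congrArg (fun s => (1 - s)⁻¹) (finsum_mem_congr rfl fun c hc => ?_)
  refine congrArg _ (dressProd_congr hc.1 (fun v hv => ?_) fun U hU v hv => ?_)
  · exact Finset.mem_erase.2 ⟨fun h => hc.2.1 (h ▸ hv), hc.2.2.1 v hv⟩
  · have hU' := (Finset.card_le_card hU).trans hS
    rw [dressF, ih m (by omega) hv hU', ih U.card (by omega) hv le_rfl]

theorem dressF_eq {S : Finset V} {α : V} (hα : α ∈ S) :
    dressF E S α = (1 - cycleSum E S α)⁻¹ :=
  dressFAux_eq _ hα le_rfl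

theorem pathSum_eq_mul (S : Finset V) (α ω : V) :
    pathSum E S α ω = dressF E S α * pathTailSum E S α ω := by
  rw [pathSum, pathTailSum, mul_finsum_mem]
  exact finsum_mem_congr rfl fun c _ => by rw [dressProd]; ring

theorem pathTailSum_self (S : Finset V) (α : V) : pathTailSum E S α α = 1 := by
  have : simplePathTails E S α α = {[]} := by
    ext c
    refine ⟨fun hc => hc.2.eq_nil (List.nodup_cons.1 hc.1).1, ?_⟩
    rintro rfl
    exact ⟨by simp, by simp, .singleton α, rfl⟩
  rw [pathTailSum, this, finsum_mem_singleton]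
  simp [dressProd]

variable [Fintype V] [DecidableRel E]

theorem pathTailSum_of_ne (S : Finset V) {α ω : V} (hω : ω ≠ α) :
    pathTailSum E S α ω = ∑ β ∈ (S.erase α).filter (E α), X * pathSum E (S.erase α) β ω := by
  have hunion : simplePathTails E S α ω = ⋃ β ∈ ((S.erase α).filter (E α) : Set V),
      (β :: ·) '' simplePathTails E (S.erase α) β ω := by
    ext c
    simp only [Set.mem_iUnion, Set.mem_image, Finset.mem_coe, exists_prop]
    constructor
    · rintro ⟨hnd, hw⟩
      match c, hnd, hw with
      | [], _, hw => exact absurd hw.2.2.symm hω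
      | β :: r, hnd, hw =>
        obtain ⟨hα, hnd⟩ := List.nodup_cons.1 hnd
        obtain ⟨hβ, hr⟩ := isWalkTail_cons_and_notMem_iff.1 ⟨hw, hα⟩
        exact ⟨β, Finset.mem_filter.2 hβ, r, ⟨hnd, hr⟩, rfl⟩
    · rintro ⟨β, hβ, r, ⟨hnd, hr⟩, rfl⟩
      obtain ⟨hw, hα⟩ := isWalkTail_cons_and_notMem_iff.2 ⟨Finset.mem_filter.1 hβ, hr⟩
      exact ⟨List.nodup_cons.2 ⟨hα, hnd⟩, hw⟩
  have hdisj : ((S.erase α).filter (E α) : Set V).PairwiseDisjoint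
      fun β => (β :: ·) '' simplePathTails E (S.erase α) β ω := by
    intro β _ β' _ hne
    refine Set.disjoint_left.2 ?_
    rintro _ ⟨r, -, rfl⟩ ⟨r', -, h⟩
    exact hne (List.cons_eq_cons.1 h).1.symm
  rw [pathTailSum, hunion, finsum_mem_biUnion hdisj (Finset.finite_toSet _)
    fun β _ => (simplePathTails_finite _ β ω).image _, finsum_mem_coe_finset]
  refine Finset.sum_congr rfl fun β _ => ?_
  rw [finsum_mem_image List.cons_injective.injOn, pathSum, mul_finsum_mem]
  exact finsum_mem_congr rfl fun r _ => by rw [List.length_cons, pow_succ']; ring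

theorem cycleSum_eq {S : Finset V} {α : V} (hα : α ∈ S) :
    cycleSum E S α = ∑ γ ∈ S.filter (E · α), X * pathTailSum E S α γ := by
  have hunion : {c | c.Nodup ∧ IsFirstReturn E S α c} =
      ⋃ γ ∈ (S.filter (E · α) : Set V), simplePathTails E S α γ := by
    ext c
    simp only [Set.mem_ofPred_eq, Set.mem_iUnion, Finset.mem_coe, Finset.mem_filter, exists_prop,
      isFirstReturn_iff, simplePathTails, List.nodup_cons]
    constructor
    · rintro ⟨hnd, ⟨hw, hα'⟩, hE⟩
      exact ⟨_, ⟨hw.last_mem hα, hE⟩, ⟨hα', hnd⟩, hw⟩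
    · rintro ⟨γ, ⟨-, hE⟩, ⟨hα', hnd⟩, hw⟩
      obtain rfl : c.getLastD α = γ := hw.2.2
      exact ⟨hnd, ⟨hw, hα'⟩, hE⟩
  have hdisj : (S.filter (E · α) : Set V).PairwiseDisjoint (simplePathTails E S α) := by
    intro γ _ γ' _ hne
    refine Set.disjoint_left.2 fun c hc hc' => hne ?_
    rw [← hc.2.2.2, ← hc'.2.2.2]
  rw [cycleSum, hunion, finsum_mem_biUnion hdisj (Finset.finite_toSet _)
    fun γ _ => simplePathTails_finite _ α γ, finsum_mem_coe_finset]
  refine Finset.sum_congr rfl fun γ _ => ?_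
  rw [pathTailSum, mul_finsum_mem]
  exact finsum_mem_congr rfl fun c _ => by rw [pow_succ']; ring

theorem walkGF_eq_pathSum (S : Finset V) {α : V} (hα : α ∈ S) (ω : V) :
    walkGF E S α ω = pathSum E S α ω := by
  induction S using Finset.strongInduction generalizing α ω with
  | H S ih =>
  have havoid : ∀ ω, avoidingWalkGF E S α ω = pathTailSum E S α ω := by
    intro ω
    rcases eq_or_ne ω α with rfl | hω
    · rw [avoidingWalkGF_self, pathTailSum_self]
    · rw [avoidingWalkGF_of_ne S hω, pathTailSum_of_ne S hω]
      exact Finset.sum_congr rfl fun β hβ => by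
        rw [ih _ (Finset.erase_ssubset hα) (Finset.mem_filter.1 hβ).1]
  have hcycle : firstReturnGF E S α = cycleSum E S α := by
    simp only [firstReturnGF_eq hα, cycleSum_eq hα, havoid]
  have hconst : constantCoeff (1 - cycleSum E S α) ≠ 0 := by
    simp [← hcycle, firstReturnGF_eq hα]
  have hdecomp := walkGF_eq_add_mul (E := E) hα ω
  rw [hcycle, havoid] at hdecomp
  rw [pathSum_eq_mul, dressF_eq hα]
  calc walkGF E S α ω
      = (1 - cycleSum E S α)⁻¹ * ((1 - cycleSum E S α) * walkGF E S α ω) := by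
        rw [← mul_assoc, PowerSeries.inv_mul_cancel _ hconst, one_mul]
    _ = (1 - cycleSum E S α)⁻¹ * pathTailSum E S α ω := by
        congr 1
        linear_combination hdecomp

end PathSums

section WholeQuiver

variable {V : Type} [Fintype V] {E : V → V → Prop}

theorem isWalkTail_univ_iff {α ω : V} {c : List V} :
    IsWalkTail E Finset.univ α ω c ↔ (α :: c).IsChain E ∧ (α :: c).getLast? = some ω := by
  simp [IsWalkTail, List.getLast?_cons]

theorem walkGF_univ (α ω : V) :
    walkGF E Finset.univ α ω = mk fun n => (nWalks E n α ω : ℚ) := by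
  ext n
  simp only [walkGF, countGF, coeff_mk, nWalks]
  let cons (c : {c : {c // IsWalkTail E Finset.univ α ω c} // c.1.length = n}) :
      {L : List V // L.length = n + 1 ∧ L.head? = some α ∧ L.getLast? = some ω ∧ L.IsChain E} :=
    ⟨α :: c.1.1, by simp [c.2], rfl, (isWalkTail_univ_iff.1 c.1.2).2,
      (isWalkTail_univ_iff.1 c.1.2).1⟩
  have hcons : cons.Bijective := by
    refine ⟨fun c d h => Subtype.ext (Subtype.ext (List.cons_injective (congrArg Subtype.val h))),
      fun ⟨L, hlen, hh, hl, hc⟩ => ?_⟩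
    obtain ⟨c, rfl⟩ := List.head?_eq_some_iff.1 hh
    exact ⟨⟨⟨c, isWalkTail_univ_iff.2 ⟨hc, hl⟩⟩, by simpa using hlen⟩, rfl⟩
  exact congrArg _ (Nat.card_congr (Equiv.ofBijective cons hcons))

theorem pathSum_univ [DecidableEq V] (α ω : V) :
    pathSum E Finset.univ α ω =
      ∑ᶠ L ∈ {L : List V | L.Nodup ∧ L.head? = some α ∧ L.getLast? = some ω ∧ L.IsChain E},
        X ^ (L.length - 1) * dressProd (dressF E) Finset.univ L := by
  have himage : {L : List V | L.Nodup ∧ L.head? = some α ∧ L.getLast? = some ω ∧ L.IsChain E} =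
      (α :: ·) '' simplePathTails E Finset.univ α ω := by
    ext L
    constructor
    · rintro ⟨hnd, hh, hl, hc⟩
      obtain ⟨c, rfl⟩ := List.head?_eq_some_iff.1 hh
      exact ⟨c, ⟨hnd, isWalkTail_univ_iff.2 ⟨hc, hl⟩⟩, rfl⟩
    · rintro ⟨c, ⟨hnd, hw⟩, rfl⟩
      exact ⟨hnd, rfl, (isWalkTail_univ_iff.1 hw).2, (isWalkTail_univ_iff.1 hw).1⟩
  rw [himage, finsum_mem_image List.cons_injective.injOn, pathSum]
  simp
end WholeQuiver

/-- Path-sum formula for walks: the generating function of the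
numbers of walks from `α` to `ω` on a finite quiver equals
`Σ_π z^p · Π_{i=0}^{p} F_{V∖{σ₀,…,σ_{i-1}}}(σ_i)`, the sum running over all simple
paths `π = (σ₀ σ₁ ⋯ σ_p)` of `G` with `σ₀ = α` and `σ_p = ω` (recorded by their
vertex sequences; for `α = ω` the only such path is the trivial one, `p = 0`). -/
theorem stmt11 {V : Type} [Fintype V] [DecidableEq V] (E : V → V → Prop) (α ω : V) :
    PowerSeries.mk (fun n => (nWalks E n α ω : ℚ)) =
      ∑ᶠ L ∈ {L : List V | L.Nodup ∧ L.head? = some α ∧ L.getLast? = some ω ∧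
          L.Chain' E},
        (PowerSeries.X : PowerSeries ℚ) ^ (L.length - 1) *
          dressProd (dressF E) Finset.univ L := by
  classical
  rw [← walkGF_univ, walkGF_eq_pathSum _ (Finset.mem_univ α) ω]
  exact pathSum_univ α ω
end
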